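/- arXiv:1601.04631 — 7 statements merged into one kernel-verified Lean document; each statement's English description precedes it below -/
import Mathlib

section
/- Let C be an abelian category with a central charge Z. If V₁ and V₂ are Z-semistable objects with arg Z(V₂) < arg Z(V₁) (strictly, i.e. Im(conj(Z(V₂))·Z(V₁)) > 0), then every morphism f : V₁ → V₂ is zero. -/
open CategoryTheory CategoryTheory.Limits

/-- `arg z ≤ arg w` for arguments taken in `(0, π]`. -/
def argLE (z w : ℂ) : Prop := 0 ≤ ((starRingEnd ℂ) z * w).im

/-- `arg z < arg w` for arguments taken in `(0, π]`. -/
def argLT (z w : ℂ) : Prop := 0 < ((starRingEnd ℂ) z * w).im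

/-- membership in `H₊ = {z : Im z > 0, or Im z = 0 and Re z < 0}`. -/
def memHPlus (z : ℂ) : Prop := 0 < z.im ∨ (z.im = 0 ∧ z.re < 0)

/-- A central charge on an abelian category: additive on short exact sequences and
taking values in `H₊` on nonzero objects. -/
def IsCentralCharge {C : Type*} [Category C] [Abelian C] (Z : C → ℂ) : Prop :=
  (∀ S : ShortComplex C, S.ShortExact → Z S.X₂ = Z S.X₁ + Z S.X₃) ∧
  (∀ E : C, ¬ IsZero E → memHPlus (Z E))

/-- A nonzero object `E` is `Z`-semistable if `arg Z(E') ≤ arg Z(E)` for every nonzero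
subobject `E'` of `E`. -/
def IsSemistable {C : Type*} [Category C] [Abelian C] (Z : C → ℂ) (E : C) : Prop :=
  ¬ IsZero E ∧ ∀ E' : Subobject E, ¬ IsZero (E' : C) → argLE (Z (E' : C)) (Z E)

open ZeroObject in
lemma aux_Z_zero {C : Type*} [Category C] [Abelian C] (Z : C → ℂ)
    (hZ : IsCentralCharge Z) : Z (0 : C) = 0 := by
  have := hZ.1 (ShortComplex.mk (Iso.refl (0 : C)).hom (0 : (0 : C) ⟶ (0 : C)) (by simp))
    ⟨(ShortComplex.exact_iff_epi _ rfl).2 inferInstance⟩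
  exact left_eq_add.mp this

open ZeroObject in
lemma aux_iso_invariance {C : Type*} [Category C] [Abelian C] (Z : C → ℂ)
    (hZ : IsCentralCharge Z) {A B : C} (e : A ≅ B) : Z A = Z B := by
  have hzero : Z (0 : C) = 0 := aux_Z_zero Z hZ
  have := hZ.1 (ShortComplex.mk e.hom (0 : B ⟶ (0 : C)) (by simp))
    ⟨(ShortComplex.exact_iff_epi _ rfl).2 inferInstance⟩
  rw [hzero] at this
  simpa using this.symm

lemma aux_cross (z w u : ℂ) (hz : memHPlus z) (hw : memHPlus w) (hu : memHPlus u)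
    (h1 : argLE z w) (h2 : argLE w u) : argLE z u := by
  have hz' : 0 ≤ z.im := by rcases hz with h | ⟨h, _⟩ <;> simp [h.le, h]
  have hu' : 0 ≤ u.im := by rcases hu with h | ⟨h, _⟩ <;> simp [h.le, h]
  simp only [argLE, Complex.mul_im, Complex.conj_re, Complex.conj_im, neg_mul] at h1 h2 ⊢
  rcases hw with hw | ⟨hw1, hw2⟩
  · nlinarith [mul_nonneg h1 hu', mul_nonneg h2 hz']
  · rcases hu with hu | ⟨hu1, hu2⟩
    · nlinarith [mul_neg_of_neg_of_pos hw2 hu, mul_eq_zero_of_left hw1 u.re]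
    · nlinarith [mul_nonneg hz' (neg_nonneg.2 hu2.le), mul_eq_zero_of_right z.re hu1,
        mul_eq_zero_of_left hw1 u.re]

lemma aux_shift (a b : ℂ) (h : argLE a (a + b)) : argLE (a + b) b := by
  simp only [argLE, Complex.mul_im, Complex.conj_re, Complex.conj_im, neg_mul,
    Complex.add_re, Complex.add_im] at h ⊢
  nlinarith

/-- If `V₁`, `V₂` are `Z`-semistable and `arg Z(V₂) < arg Z(V₁)`, then every morphism
`f : V₁ ⟶ V₂` vanishes. -/
theorem hom_eq_zero_of_semistable_of_arg_lt {C : Type*} [Category C] [Abelian C]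
    (Z : C → ℂ) (hZ : IsCentralCharge Z) (V₁ V₂ : C)
    (h₁ : IsSemistable Z V₁) (h₂ : IsSemistable Z V₂)
    (hlt : argLT (Z V₂) (Z V₁)) (f : V₁ ⟶ V₂) : f = 0 := by
  by_contra hf
  set g := factorThruImage f with hg
  have hI : ¬ IsZero (image f) := by
    intro h
    exact hf (by rw [← image.fac f, h.eq_zero_of_tgt (factorThruImage f), zero_comp])
  have e1 := hZ.1 (ShortComplex.mk (kernel.ι g) g (by simp)) ⟨ShortComplex.exact_kernel _⟩
  have e2 := hZ.1 (ShortComplex.mk (image.ι f) (cokernel.π (image.ι f)) (by simp))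
    ⟨ShortComplex.exact_cokernel _⟩
  dsimp at e1 e2
  -- argLE (Z V₁) (Z (image f))
  have hLE1 : argLE (Z V₁) (Z (image f)) := by
    by_cases hK : IsZero (kernel g)
    · have hK0 : Z (kernel g) = 0 := by
        rw [aux_iso_invariance Z hZ hK.isoZero]
        exact aux_Z_zero Z hZ
      rw [hK0, zero_add] at e1
      rw [e1]
      simp only [argLE, Complex.mul_im, Complex.conj_re, Complex.conj_im, neg_mul]
      nlinarith
    · have hne : ¬ IsZero ((Subobject.mk (kernel.ι g) : Subobject V₁) : C) := by
        intro h
        exact hK (h.of_iso (Subobject.underlyingIso (kernel.ι g)).symm)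
      have hs := h₁.2 (Subobject.mk (kernel.ι g)) hne
      rw [aux_iso_invariance Z hZ (Subobject.underlyingIso (kernel.ι g))] at hs
      rw [e1] at hs ⊢
      exact aux_shift _ _ hs
  have hne2 : ¬ IsZero ((Subobject.mk (image.ι f) : Subobject V₂) : C) := by
    intro h
    exact hI (h.of_iso (Subobject.underlyingIso (image.ι f)).symm)
  have hLE2 : argLE (Z (image f)) (Z V₂) := by
    have hs := h₂.2 (Subobject.mk (image.ι f)) hne2
    rwa [aux_iso_invariance Z hZ (Subobject.underlyingIso (image.ι f))] at hs
  have hfinal := aux_cross _ _ _ (hZ.2 V₁ h₁.1) (hZ.2 (image f) hI) (hZ.2 V₂ h₂.1) hLE1 hLE2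
  simp only [argLE, argLT, Complex.mul_im, Complex.conj_re, Complex.conj_im, neg_mul]
    at hfinal hlt
  linarith
end

section
/- Let C be an abelian category with a central charge Z, and let f : V₁ → V₂ be a morphism between Z-semistable objects of the same slope, i.e. Im(conj(Z(V₁))·Z(V₂)) = 0. Then the kernel of f, the image of f, and the cokernel of f are each either zero or Z-semistable of the same slope as V₁. -/
/-!
Write `B(z, w) = Im(conj z · w)`. Along a short exact sequence `0 → A → E → Q → 0` we have
`B(Z A, Z E) = B(Z A, Z Q) = B(Z E, Z Q)`, so a subobject of smaller phase is the same as a quotient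
of larger phase. For `f : V₁ ⟶ V₂`, the image is a quotient of `V₁` and a subobject of `V₂`,
so its phase is squeezed between those of `V₁` and `V₂`, which agree; the identity then gives the
kernel and the cokernel that phase too. On `H₊` equal phase means positive proportionality, so a
subobject of a semistable object with the same phase is semistable, and so is such a quotient `Q`
of `E`: a subobject `Q' ⊆ Q` is controlled through `Q / Q'`, which is a quotient of `E`.
-/

open CategoryTheory CategoryTheory.Limits

/-- `z` and `w` have the same argument (slope). -/
def sameSlope (z w : ℂ) : Prop := ((starRingEnd ℂ) z * w).im = 0

lemma im_conj_mul (z w : ℂ) : ((starRingEnd ℂ) z * w).im = z.re * w.im - z.im * w.re := by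
  simp only [Complex.mul_im, Complex.conj_re, Complex.conj_im]
  ring

lemma argLE_zero_left (w : ℂ) : argLE 0 w := by
  simp [argLE]

lemma sameSlope_symm {z w : ℂ} (h : sameSlope z w) : sameSlope w z := by
  rw [sameSlope, im_conj_mul] at h ⊢
  linarith

lemma sameSlope_of_argLE_of_argLE {z w : ℂ} (h₁ : argLE z w) (h₂ : argLE w z) :
    sameSlope z w := by
  rw [argLE, im_conj_mul] at h₁ h₂
  rw [sameSlope, im_conj_mul]
  linarith

lemma argLE_add_iff (a b : ℂ) : argLE a (a + b) ↔ argLE (a + b) b := by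
  simp only [argLE, im_conj_mul, Complex.add_re, Complex.add_im]
  constructor <;> intro h <;> linarith

lemma sameSlope_add_iff (a b : ℂ) : sameSlope a (a + b) ↔ sameSlope (a + b) b := by
  simp only [sameSlope, im_conj_mul, Complex.add_re, Complex.add_im]
  constructor <;> intro h <;> linarith

lemma sameSlope_trans {x y z : ℂ} (hy : y ≠ 0) (hxy : sameSlope x y) (hyz : sameSlope y z) :
    sameSlope x z := by
  rw [sameSlope, im_conj_mul] at hxy hyz ⊢
  have hre : y.re * (x.re * z.im - x.im * z.re) = 0 := by
    linear_combination z.re * hxy + x.re * hyz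
  have him : y.im * (x.re * z.im - x.im * z.re) = 0 := by
    linear_combination z.im * hxy + x.im * hyz
  by_contra h
  exact hy (Complex.ext ((mul_eq_zero.1 hre).resolve_right h) ((mul_eq_zero.1 him).resolve_right h))

lemma memHPlus.ne_zero {z : ℂ} (hz : memHPlus z) : z ≠ 0 := by
  rintro rfl
  rcases hz with h | ⟨-, h⟩ <;> simp at h

lemma memHPlus.exists_pos_mul {z w : ℂ} (hz : memHPlus z) (hw : memHPlus w)
    (h : sameSlope z w) : ∃ c : ℝ, 0 < c ∧ w = c * z := by
  rw [sameSlope, im_conj_mul] at h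
  rcases hz with hzim | ⟨hzim, hzre⟩
  · have hwim : 0 < w.im := by
      rcases hw with hwim | ⟨hwim, hwre⟩
      · exact hwim
      · rw [hwim] at h
        nlinarith
    refine ⟨w.im / z.im, by positivity, Complex.ext ?_ ?_⟩ <;>
      simp only [Complex.mul_re, Complex.mul_im, Complex.ofReal_re, Complex.ofReal_im] <;>
      field_simp <;> linarith
  · rcases hw with hwim | ⟨hwim, hwre⟩
    · rw [hzim] at h
      nlinarith
    have hzre' := hzre.ne
    refine ⟨w.re / z.re, div_pos_of_neg_of_neg hwre hzre, Complex.ext ?_ ?_⟩ <;>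
      simp only [Complex.mul_re, Complex.mul_im, Complex.ofReal_re, Complex.ofReal_im, hzim,
        hwim] <;>
      field_simp <;> ring

lemma argLE_of_sameSlope_right {e x y : ℂ} (hx : memHPlus x) (hy : memHPlus y)
    (hxy : sameSlope x y) (h : argLE e x) : argLE e y := by
  obtain ⟨c, hc, rfl⟩ := hx.exists_pos_mul hy hxy
  rw [argLE, im_conj_mul] at h ⊢
  simp only [Complex.mul_re, Complex.mul_im, Complex.ofReal_re, Complex.ofReal_im]
  nlinarith

lemma argLE_of_sameSlope_left {e x y : ℂ} (hx : memHPlus x) (hy : memHPlus y)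
    (hxy : sameSlope x y) (h : argLE x e) : argLE y e := by
  obtain ⟨c, hc, rfl⟩ := hx.exists_pos_mul hy hxy
  rw [argLE, im_conj_mul] at h ⊢
  simp only [Complex.mul_re, Complex.mul_im, Complex.ofReal_re, Complex.ofReal_im]
  nlinarith

section CentralCharge

variable {C : Type*} [Category C] [Abelian C] {Z : C → ℂ}

lemma IsCentralCharge.map_eq_zero (hZ : IsCentralCharge Z) {X : C} (hX : IsZero X) :
    Z X = 0 := by
  have h := hZ.1 (ShortComplex.mk (0 : X ⟶ X) (0 : X ⟶ X) zero_comp)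
    (.mk' (ShortComplex.exact_of_isZero_X₂ _ hX) (hX.mono _) (hX.epi _))
  linear_combination -h

lemma IsCentralCharge.map_eq_add_of_mono (hZ : IsCentralCharge Z) {A E : C} (i : A ⟶ E)
    [Mono i] : Z E = Z A + Z (cokernel i) :=
  hZ.1 _ (.mk' (ShortComplex.exact_cokernel i) ‹_› inferInstance)

lemma IsCentralCharge.map_eq_add_of_epi (hZ : IsCentralCharge Z) {E Q : C} (p : E ⟶ Q)
    [Epi p] : Z E = Z (kernel p) + Z Q :=
  hZ.1 _ (.mk' (ShortComplex.exact_kernel p) inferInstance ‹_›)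

lemma IsCentralCharge.map_iso (hZ : IsCentralCharge Z) {X Y : C} (e : X ≅ Y) : Z X = Z Y := by
  rw [hZ.map_eq_add_of_mono e.hom, hZ.map_eq_zero (isZero_cokernel_of_epi e.hom), add_zero]

lemma IsCentralCharge.map_eq_kernel_add_image (hZ : IsCentralCharge Z) {V₁ V₂ : C}
    (f : V₁ ⟶ V₂) : Z V₁ = Z (kernel f) + Z (image f) := by
  rw [hZ.map_eq_add_of_mono (kernel.ι f), ← hZ.map_iso (Abelian.coimageIsoImage' f)]

lemma IsCentralCharge.map_eq_image_add_cokernel (hZ : IsCentralCharge Z) {V₁ V₂ : C}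
    (f : V₁ ⟶ V₂) : Z V₂ = Z (image f) + Z (cokernel f) := by
  rw [hZ.map_eq_add_of_mono (image.ι f), hZ.map_iso (cokernelImageι f)]

lemma IsSemistable.argLE_of_mono (hZ : IsCentralCharge Z) {A E : C} (hE : IsSemistable Z E)
    (i : A ⟶ E) [Mono i] : argLE (Z A) (Z E) := by
  by_cases hA : IsZero A
  · rw [hZ.map_eq_zero hA]
    exact argLE_zero_left _
  · have e := Subobject.underlyingIso i
    rw [← hZ.map_iso e]
    exact hE.2 _ fun h => hA (h.of_iso e.symm)

lemma IsSemistable.argLE_of_epi (hZ : IsCentralCharge Z) {E Q : C} (hE : IsSemistable Z E)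
    (p : E ⟶ Q) [Epi p] : argLE (Z E) (Z Q) := by
  have h := hE.argLE_of_mono hZ (kernel.ι p)
  rw [hZ.map_eq_add_of_epi p] at h ⊢
  exact (argLE_add_iff _ _).1 h

lemma IsSemistable.of_mono (hZ : IsCentralCharge Z) {A E : C} (hE : IsSemistable Z E)
    (i : A ⟶ E) [Mono i] (hA : ¬IsZero A) (h : sameSlope (Z A) (Z E)) :
    IsSemistable Z A :=
  ⟨hA, fun A' _ => argLE_of_sameSlope_right (hZ.2 _ hE.1) (hZ.2 _ hA) (sameSlope_symm h)
    (hE.argLE_of_mono hZ (A'.arrow ≫ i))⟩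

lemma IsSemistable.of_epi (hZ : IsCentralCharge Z) {E Q : C} (hE : IsSemistable Z E)
    (p : E ⟶ Q) [Epi p] (hQ : ¬IsZero Q) (h : sameSlope (Z Q) (Z E)) :
    IsSemistable Z Q := by
  refine ⟨hQ, fun Q' _ => ?_⟩
  have hquot : argLE (Z Q) (Z (cokernel Q'.arrow)) :=
    argLE_of_sameSlope_left (hZ.2 _ hE.1) (hZ.2 _ hQ) (sameSlope_symm h)
      (hE.argLE_of_epi hZ (p ≫ cokernel.π Q'.arrow))
  rw [hZ.map_eq_add_of_mono Q'.arrow] at hquot ⊢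
  exact (argLE_add_iff _ _).2 hquot

end CentralCharge

/-- For a morphism `f : V₁ ⟶ V₂` of `Z`-semistable objects of the same slope, the
kernel, image and cokernel of `f` are each zero or `Z`-semistable of the same slope
as `V₁`. -/
theorem kernel_image_cokernel_semistable {C : Type*} [Category C] [Abelian C]
    (Z : C → ℂ) (hZ : IsCentralCharge Z) (V₁ V₂ : C)
    (h₁ : IsSemistable Z V₁) (h₂ : IsSemistable Z V₂)
    (hslope : sameSlope (Z V₁) (Z V₂)) (f : V₁ ⟶ V₂) :
    (IsZero (kernel f) ∨
      (IsSemistable Z (kernel f) ∧ sameSlope (Z (kernel f)) (Z V₁))) ∧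
    (IsZero (image f) ∨
      (IsSemistable Z (image f) ∧ sameSlope (Z (image f)) (Z V₁))) ∧
    (IsZero (cokernel f) ∨
      (IsSemistable Z (cokernel f) ∧ sameSlope (Z (cokernel f)) (Z V₁))) := by
  have hv₁ := hZ.2 _ h₁.1
  have hv₂ := hZ.2 _ h₂.1
  have hV₁ := hZ.map_eq_kernel_add_image f
  have hV₂ := hZ.map_eq_image_add_cokernel f
  have si : sameSlope (Z (image f)) (Z V₁) := sameSlope_of_argLE_of_argLE
    (argLE_of_sameSlope_right hv₂ hv₁ (sameSlope_symm hslope) (h₂.argLE_of_mono hZ (image.ι f)))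
    (h₁.argLE_of_epi hZ (factorThruImage f))
  have sk : sameSlope (Z (kernel f)) (Z V₁) := by
    rw [hV₁] at si ⊢
    exact (sameSlope_add_iff _ _).2 (sameSlope_symm si)
  have sq₂ : sameSlope (Z (cokernel f)) (Z V₂) := by
    have si₂ := sameSlope_trans hv₁.ne_zero si hslope
    rw [hV₂] at si₂ ⊢
    exact sameSlope_symm ((sameSlope_add_iff _ _).1 si₂)
  have sq := sameSlope_trans hv₂.ne_zero sq₂ (sameSlope_symm hslope)
  exact ⟨or_iff_not_imp_left.2 fun h => ⟨h₁.of_mono hZ (kernel.ι f) h sk, sk⟩,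
    or_iff_not_imp_left.2 fun h => ⟨h₁.of_epi hZ (factorThruImage f) h si, si⟩,
    or_iff_not_imp_left.2 fun h => ⟨h₂.of_epi hZ (cokernel.π f) h sq₂, sq⟩⟩
end

section
/- Let C be an abelian category with a central charge Z in which every object is both Noetherian and Artinian. Then every nonzero object V of C admits a unique Harder–Narasimhan filtration: a chain of subobjects 0 = F₀ ⊂ F₁ ⊂ ⋯ ⊂ F_n = V (n ≥ 1, all inclusions strict) such that each subquotient F_i/F_{i−1} is Z-semistable and the arguments strictly decrease, i.e. arg Z(F_{i+1}/F_i) < arg Z(F_i/F_{i−1}) for 1 ≤ i ≤ n−1. Uniqueness means: any two such filtrations have the same length and the same subobjects. -/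
open CategoryTheory CategoryTheory.Limits

/-- A finite filtration `0 = F₀ ⊂ F₁ ⊂ ⋯ ⊂ Fₙ = V` of `V` by subobjects, with strict
inclusions. -/
structure Filtration {C : Type*} [Category C] [Abelian C] (V : C) where
  n : ℕ
  F : Fin (n + 1) → Subobject V
  bot_eq : F 0 = ⊥
  top_eq : F (Fin.last n) = ⊤
  lt : ∀ i : Fin n, F i.castSucc < F i.succ

/-- The `i`-th subquotient `F_{i+1}/F_i` of a filtration. -/
noncomputable def Filtration.quot {C : Type*} [Category C] [Abelian C] {V : C}
    (Φ : Filtration V) (i : Fin Φ.n) : C :=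
  cokernel (Subobject.ofLE (Φ.F i.castSucc) (Φ.F i.succ) (Φ.lt i).le)

/-- A filtration `0 = F₀ ⊂ F₁ ⊂ ⋯ ⊂ Fₙ = V` (with `n ≥ 1`) is a Harder–Narasimhan
filtration if every subquotient `F_i/F_{i-1}` is `Z`-semistable and the arguments of the
central charges of consecutive subquotients strictly decrease. -/
def IsHNFiltration {C : Type*} [Category C] [Abelian C] (Z : C → ℂ) {V : C}
    (Φ : Filtration V) : Prop :=
  1 ≤ Φ.n ∧ (∀ i : Fin Φ.n, IsSemistable Z (Φ.quot i)) ∧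
  ∀ i j : Fin Φ.n, (i : ℕ) + 1 = (j : ℕ) → argLT (Z (Φ.quot j)) (Z (Φ.quot i))

/-!
Restricted to the subobjects of `V`, the central charge gives `z s = Z s` with `z b - z a ∈ H₊`
for `a < b` and `z (a ⊔ b) - z b = z a - z (a ⊓ b)` (from `0 → a ⊓ b → a ⊞ b → a ⊔ b → 0`).
Subobjects of `b / a` are the `c` with `a < c ≤ b`, so semistability of `b / a` only concerns the
phases `arg (z c - z a)`, and the theorem becomes a statement about this lattice.

There everything follows from the seesaw property of phases along
`z b - z a = (z c - z a) + (z b - z c)`. Over `a < ⊤` the phase `arg (z x - z a)` attains its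
maximum (descending chain condition), and the largest maximiser `c` (ascending chain condition) is
the maximal destabilising subobject; starting again from `c` builds an HN filtration by Noetherian
induction. Conversely, in an HN filtration every `d` not below `F₁` has phase strictly below that
of `F₁`, because `d / (d ⊓ Fₖ)` embeds in `Fₖ₊₁ / Fₖ`, whose phase is smaller. Hence `F₁` is the
maximal destabilising subobject, and uniqueness follows by induction on the length.
-/

namespace HarderNarasimhan

section Complex

variable {u v z w : ℂ}

lemma ne_zero_of_memHPlus (h : memHPlus z) : z ≠ 0 := by
  rintro rfl
  rcases h with h | ⟨_, h⟩ <;> simp at h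

lemma arg_pos_of_memHPlus (h : memHPlus z) : 0 < z.arg := by
  rcases h with h | ⟨h0, hre⟩
  · refine (Complex.arg_nonneg_iff.2 h.le).lt_of_ne fun h' => ?_
    rw [(Complex.arg_eq_zero_iff.1 h'.symm).2] at h
    exact h.false
  · rw [Complex.arg_eq_pi_iff.2 ⟨hre, h0⟩]
    exact Real.pi_pos

lemma memHPlus_add (hu : memHPlus u) (hv : memHPlus v) : memHPlus (u + v) := by
  unfold memHPlus at *
  rw [Complex.add_im, Complex.add_re]
  rcases hu with hu | ⟨hu, hu'⟩ <;> rcases hv with hv | ⟨hv, hv'⟩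
  all_goals first | (left; linarith) | (right; constructor <;> linarith)

lemma im_conj_mul_eq (z w : ℂ) :
    ((starRingEnd ℂ) z * w).im = ‖z‖ * ‖w‖ * Real.sin (w.arg - z.arg) := by
  rcases eq_or_ne z 0 with rfl | hz
  · simp
  rcases eq_or_ne w 0 with rfl | hw
  · simp
  have hz' : ‖z‖ ≠ 0 := norm_ne_zero_iff.mpr hz
  have hw' : ‖w‖ ≠ 0 := norm_ne_zero_iff.mpr hw
  rw [Real.sin_sub, Complex.sin_arg, Complex.sin_arg, Complex.cos_arg hz, Complex.cos_arg hw,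
    Complex.mul_im, Complex.conj_re, Complex.conj_im]
  field_simp
  ring

lemma argLE_iff_arg_le (hz : memHPlus z) (hw : memHPlus w) : argLE z w ↔ z.arg ≤ w.arg := by
  have hnorm : 0 < ‖z‖ * ‖w‖ := by
    have := ne_zero_of_memHPlus hz; have := ne_zero_of_memHPlus hw; positivity
  have := arg_pos_of_memHPlus hz; have := arg_pos_of_memHPlus hw
  have := Complex.arg_le_pi z; have := Complex.arg_le_pi w
  rw [argLE, im_conj_mul_eq, mul_nonneg_iff_of_pos_left hnorm]
  constructor
  · intro h
    by_contra! hlt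
    have := Real.sin_neg_of_neg_of_neg_pi_lt (x := w.arg - z.arg) (by linarith) (by linarith)
    linarith
  · intro h
    exact Real.sin_nonneg_of_nonneg_of_le_pi (by linarith) (by linarith)

lemma argLT_iff_not_argLE : argLT z w ↔ ¬ argLE w z := by
  have : ((starRingEnd ℂ) w * z).im = -((starRingEnd ℂ) z * w).im := by
    simp only [Complex.mul_im, Complex.conj_re, Complex.conj_im]; ring
  rw [argLT, argLE, this, not_le, neg_neg_iff_pos]

lemma argLT_iff_arg_lt (hz : memHPlus z) (hw : memHPlus w) : argLT z w ↔ z.arg < w.arg := by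
  rw [argLT_iff_not_argLE, argLE_iff_arg_le hw hz, not_le]

lemma arg_le_arg_add_iff (hu : memHPlus u) (hv : memHPlus v) :
    u.arg ≤ (u + v).arg ↔ u.arg ≤ v.arg := by
  have : ((starRingEnd ℂ) u * (u + v)).im = ((starRingEnd ℂ) u * v).im := by
    simp only [mul_add, Complex.add_im, Complex.mul_im, Complex.conj_re, Complex.conj_im]; ring
  rw [← argLE_iff_arg_le hu (memHPlus_add hu hv), ← argLE_iff_arg_le hu hv, argLE, argLE, this]

lemma arg_add_le_arg_iff (hu : memHPlus u) (hv : memHPlus v) :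
    (u + v).arg ≤ v.arg ↔ u.arg ≤ v.arg := by
  have : ((starRingEnd ℂ) (u + v) * v).im = ((starRingEnd ℂ) u * v).im := by
    simp only [map_add, add_mul, Complex.add_im, Complex.mul_im, Complex.conj_re,
      Complex.conj_im]; ring
  rw [← argLE_iff_arg_le (memHPlus_add hu hv) hv, ← argLE_iff_arg_le hu hv, argLE, argLE, this]

end Complex

section Lattice

variable {L : Type*}

noncomputable def phase (z : L → ℂ) (a b : L) : ℝ := (z b - z a).arg

variable [Lattice L]

structure IsLatticeCharge (z : L → ℂ) : Prop where
  memHPlus_sub : ∀ ⦃a b : L⦄, a < b → memHPlus (z b - z a)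
  sup_sub_eq : ∀ a b : L, z (a ⊔ b) - z b = z a - z (a ⊓ b)

def IsSemistableInterval (z : L → ℂ) (a b : L) : Prop :=
  a < b ∧ ∀ x, a < x → x ≤ b → phase z a x ≤ phase z a b

variable {z : L → ℂ} {a b c d s : L}

namespace IsLatticeCharge

variable (hz : IsLatticeCharge z)
include hz

lemma phase_le_phase_left_iff (hac : a < c) (hcb : c < b) :
    phase z a c ≤ phase z a b ↔ phase z a c ≤ phase z c b := by
  have h := arg_le_arg_add_iff (hz.memHPlus_sub hac) (hz.memHPlus_sub hcb)
  rwa [sub_add_sub_cancel'] at h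

lemma phase_le_phase_right_iff (hac : a < c) (hcb : c < b) :
    phase z a b ≤ phase z c b ↔ phase z a c ≤ phase z c b := by
  have h := arg_add_le_arg_iff (hz.memHPlus_sub hac) (hz.memHPlus_sub hcb)
  rwa [sub_add_sub_cancel'] at h

lemma phase_le_phase_of_le (hac : a < c) (hcb : c < b) (h : phase z a c ≤ phase z a b) :
    phase z a b ≤ phase z c b :=
  (hz.phase_le_phase_right_iff hac hcb).2 ((hz.phase_le_phase_left_iff hac hcb).1 h)

lemma phase_lt_of_phase_lt (hac : a < c) (hcb : c < b) (h : phase z a b < phase z a c) :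
    phase z c b < phase z a c :=
  not_le.1 fun h' => h.not_ge ((hz.phase_le_phase_left_iff hac hcb).2 h')

lemma lt_phase_of_lt_of_lt {θ : ℝ} (hac : a < c) (hcb : c < b) (h₁ : θ < phase z a c)
    (h₂ : θ < phase z c b) : θ < phase z a b := by
  rcases le_or_gt (phase z a c) (phase z c b) with h | h
  · exact h₁.trans_le ((hz.phase_le_phase_left_iff hac hcb).2 h)
  · exact h₂.trans (not_le.1 fun h' => h.not_ge ((hz.phase_le_phase_right_iff hac hcb).1 h'))

lemma phase_lt_of_le_of_lt {θ : ℝ} (hac : a < c) (hcb : c < b) (h₁ : phase z a c ≤ θ)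
    (h₂ : phase z c b < θ) : phase z a b < θ := by
  rcases le_or_gt (phase z a c) (phase z c b) with h | h
  · exact ((hz.phase_le_phase_right_iff hac hcb).2 h).trans_lt h₂
  · exact (not_le.1 fun h' => h.not_ge ((hz.phase_le_phase_left_iff hac hcb).1 h')).trans_le h₁

lemma phase_inf_eq (d s : L) : phase z (d ⊓ s) d = phase z s (d ⊔ s) := by
  rw [phase, phase, hz.sup_sub_eq]

end IsLatticeCharge

lemma IsSemistableInterval.phase_le_phase_sup (hd : IsSemistableInterval z a d)
    (hz : IsLatticeCharge z) (has : a ≤ s) (hds : ¬ d ≤ s) :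
    phase z a d ≤ phase z s (d ⊔ s) := by
  rw [← hz.phase_inf_eq]
  have hm : d ⊓ s < d := inf_lt_left.2 hds
  rcases (le_inf hd.1.le has : a ≤ d ⊓ s).eq_or_lt with heq | hlt
  · rw [← heq]
  · exact hz.phase_le_phase_of_le hlt hm (hd.2 _ hlt hm.le)

lemma exists_isSemistableInterval_phase_le [WellFoundedLT L] {x : L} (hax : a < x) :
    ∃ d ≤ x, IsSemistableInterval z a d ∧ phase z a x ≤ phase z a d := by
  obtain ⟨d, ⟨had, hdx, hxd⟩, hmin⟩ := wellFounded_lt.has_min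
    {y | a < y ∧ y ≤ x ∧ phase z a x ≤ phase z a y} ⟨x, hax, le_rfl, le_rfl⟩
  refine ⟨d, hdx, ⟨had, fun y hay hyd => ?_⟩, hxd⟩
  rcases hyd.lt_or_eq with hyd | rfl
  · exact (not_le.1 fun h => hmin y ⟨hay, hyd.le.trans hdx, h⟩ hyd).le.trans hxd
  · exact le_rfl

lemma IsLatticeCharge.exists_phase_max [WellFoundedLT L] [WellFoundedGT L]
    (hz : IsLatticeCharge z) (b : L) (hab : a < b) :
    ∃ m, a < m ∧ m ≤ b ∧ ∀ x, a < x → x ≤ b → phase z a x ≤ phase z a m := by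
  induction b using WellFoundedLT.induction with
  | ind b ih =>
  set W := {y | a < y ∧ y ≤ b ∧ phase z a b < phase z a y}
  rcases W.eq_empty_or_nonempty with hW | hW
  · exact ⟨b, hab, le_rfl, fun x hax hxb => not_lt.1 fun h => hW.subset ⟨hax, hxb, h⟩⟩
  obtain ⟨s, hs, hsmax⟩ := wellFounded_gt.has_min W hW
  have hsb : s < b := hs.2.1.lt_of_ne fun h => (h ▸ hs.2.2).false
  -- `s` is maximal in `W`, so a semistable `d` below `x` cannot escape `s`: otherwise `d ⊔ s`
  -- would be a larger element of `W`.
  have key : ∀ x ∈ W, ∃ d, a < d ∧ d ≤ s ∧ phase z a x ≤ phase z a d := by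
    rintro x ⟨hax, hxb, hx⟩
    obtain ⟨d, hdx, hd, hxd⟩ := exists_isSemistableInterval_phase_le (z := z) hax
    refine ⟨d, hd.1, not_not.1 fun hds => hsmax (d ⊔ s) ⟨?_, ?_, ?_⟩ (right_lt_sup.2 hds), hxd⟩
    · exact hs.1.trans (right_lt_sup.2 hds)
    · exact sup_le (hdx.trans hxb) hsb.le
    · exact hz.lt_phase_of_lt_of_lt hs.1 (right_lt_sup.2 hds) hs.2.2
        (hx.trans_le (hxd.trans (hd.phase_le_phase_sup hz hs.1.le hds)))
  obtain ⟨m, ham, hms, hm⟩ := ih s hsb hs.1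
  refine ⟨m, ham, hms.trans hsb.le, fun x hax hxb => ?_⟩
  by_cases hxW : x ∈ W
  · obtain ⟨d, had, hds, hxd⟩ := key x hxW
    exact hxd.trans (hm d had hds)
  · have hxb' : phase z a x ≤ phase z a b := not_lt.1 fun h => hxW ⟨hax, hxb, h⟩
    exact hxb'.trans (hs.2.2.le.trans (hm s hs.1 le_rfl))

variable [OrderTop L]

lemma IsLatticeCharge.exists_maxDestabilizing [WellFoundedLT L] [WellFoundedGT L]
    (hz : IsLatticeCharge z) (ha : a < ⊤) :
    ∃ c, a < c ∧ (∀ x, a < x → phase z a x ≤ phase z a c) ∧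
      ∀ y, c < y → phase z a y < phase z a c := by
  obtain ⟨m, ham, -, hm⟩ := hz.exists_phase_max ⊤ ha
  obtain ⟨c, ⟨hac, hc⟩, hcmax⟩ := wellFounded_gt.has_min
    {c | a < c ∧ ∀ x, a < x → phase z a x ≤ phase z a c} ⟨m, ham, fun x hax => hm x hax le_top⟩
  refine ⟨c, hac, hc, fun y hcy => (hc y (hac.trans hcy)).lt_of_ne fun h => ?_⟩
  exact hcmax y ⟨hac.trans hcy, fun x hx => (hc x hx).trans h.ge⟩ hcy

structure IsHNChain (z : L → ℂ) (a : L) (n : ℕ) (f : ℕ → L) : Prop where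
  apply_zero : f 0 = a
  apply_length : f n = ⊤
  semistable : ∀ k < n, IsSemistableInterval z (f k) (f (k + 1))
  phase_lt : ∀ k, k + 1 < n → phase z (f (k + 1)) (f (k + 2)) < phase z (f k) (f (k + 1))

namespace IsHNChain

variable {n m : ℕ} {f g : ℕ → L}

lemma lt (hf : IsHNChain z a n f) {k : ℕ} (hk : k < n) : f k < f (k + 1) :=
  (hf.semistable k hk).1

lemma length_eq_zero_iff (hf : IsHNChain z a n f) : n = 0 ↔ a = ⊤ := by
  constructor
  · rintro rfl
    rw [← hf.apply_zero, hf.apply_length]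
  · intro ha
    by_contra hn
    have h := hf.lt (Nat.pos_of_ne_zero hn)
    rw [hf.apply_zero, ha] at h
    exact not_top_lt h

lemma le_apply (hf : IsHNChain z a n f) {k : ℕ} (hk : k ≤ n) : a ≤ f k := by
  induction k with
  | zero => exact hf.apply_zero.ge
  | succ k ih => exact (ih (by omega)).trans (hf.lt (by omega)).le

lemma phase_lt_phase_zero (hf : IsHNChain z a n f) {k : ℕ} (hk₀ : 0 < k) (hk : k < n) :
    phase z (f k) (f (k + 1)) < phase z a (f 1) := by
  induction k with
  | zero => omega
  | succ k ih =>
    rcases k.eq_zero_or_pos with rfl | hk'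
    · simpa [hf.apply_zero] using hf.phase_lt 0 hk
    · exact (hf.phase_lt k hk).trans (ih hk' (by omega))

lemma tail (hf : IsHNChain z a (n + 1) f) : IsHNChain z (f 1) n (fun k => f (k + 1)) :=
  ⟨rfl, hf.apply_length, fun k hk => hf.semistable (k + 1) (by omega),
    fun k hk => hf.phase_lt (k + 1) (by omega)⟩

lemma phase_le_phase_one_of_le (hf : IsHNChain z a (n + 1) f) (had : a < d) (hd : d ≤ f 1) :
    phase z a d ≤ phase z a (f 1) := by
  have h := (hf.semistable 0 n.succ_pos).2 d
  rw [hf.apply_zero] at h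
  exact h had hd

lemma phase_lt_phase_one_of_not_le (hf : IsHNChain z a (n + 1) f) (hz : IsLatticeCharge z)
    {k : ℕ} (hk : k ≤ n + 1) (had : a < d) (hdk : d ≤ f k) (hd₁ : ¬ d ≤ f 1) :
    phase z a d < phase z a (f 1) := by
  induction k generalizing d with
  | zero => exact absurd (hf.apply_zero ▸ hdk) had.not_ge
  | succ k ih =>
    by_cases hdk' : d ≤ f k
    · exact ih (by omega) had hdk' hd₁
    have hk₀ : 0 < k := Nat.pos_of_ne_zero (by rintro rfl; exact hd₁ hdk)
    have hm : d ⊓ f k < d := inf_lt_left.2 hdk'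
    -- `d / (d ⊓ f k) ≅ (d ⊔ f k) / f k` lies in the `k`-th factor, of phase below the first one.
    have hmd : phase z (d ⊓ f k) d < phase z a (f 1) := by
      rw [hz.phase_inf_eq]
      exact ((hf.semistable k (by omega)).2 _ (right_lt_sup.2 hdk')
        (sup_le hdk (hf.lt (by omega)).le)).trans_lt (hf.phase_lt_phase_zero hk₀ (by omega))
    rcases (le_inf had.le (hf.le_apply (by omega)) : a ≤ d ⊓ f k).eq_or_lt with heq | hlt
    · rwa [← heq] at hmd
    refine hz.phase_lt_of_le_of_lt hlt hm ?_ hmd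
    by_cases hm₁ : d ⊓ f k ≤ f 1
    · exact hf.phase_le_phase_one_of_le hlt hm₁
    · exact (ih (by omega) hlt inf_le_right hm₁).le

lemma phase_le_phase_one (hf : IsHNChain z a (n + 1) f) (hz : IsLatticeCharge z) (had : a < d) :
    phase z a d ≤ phase z a (f 1) := by
  by_cases hd : d ≤ f 1
  · exact hf.phase_le_phase_one_of_le had hd
  · exact (hf.phase_lt_phase_one_of_not_le hz le_rfl had (hf.apply_length ▸ le_top) hd).le

lemma le_one_of_phase_le (hf : IsHNChain z a (n + 1) f) (hz : IsLatticeCharge z) (had : a < d)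
    (h : phase z a (f 1) ≤ phase z a d) : d ≤ f 1 :=
  not_not.1 fun hd =>
    h.not_gt (hf.phase_lt_phase_one_of_not_le hz le_rfl had (hf.apply_length ▸ le_top) hd)

lemma apply_one_eq (hf : IsHNChain z a (n + 1) f) (hg : IsHNChain z a (m + 1) g)
    (hz : IsLatticeCharge z) : f 1 = g 1 := by
  have hf₁ : a < f 1 := hf.apply_zero ▸ hf.lt n.succ_pos
  have hg₁ : a < g 1 := hg.apply_zero ▸ hg.lt m.succ_pos
  exact le_antisymm (hg.le_one_of_phase_le hz hf₁ (hf.phase_le_phase_one hz hg₁))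
    (hf.le_one_of_phase_le hz hg₁ (hg.phase_le_phase_one hz hf₁))

theorem unique (hf : IsHNChain z a n f) (hg : IsHNChain z a m g) (hz : IsLatticeCharge z) :
    n = m ∧ ∀ k ≤ n, f k = g k := by
  induction n generalizing a f m g with
  | zero =>
    obtain rfl : m = 0 := hg.length_eq_zero_iff.2 (hf.length_eq_zero_iff.1 rfl)
    refine ⟨rfl, fun k hk => ?_⟩
    obtain rfl : k = 0 := by omega
    rw [hf.apply_zero, hg.apply_zero]
  | succ n ih =>
    obtain ⟨m, rfl⟩ : ∃ m', m = m' + 1 := Nat.exists_eq_succ_of_ne_zero fun hm =>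
      n.succ_ne_zero (hf.length_eq_zero_iff.2 (hg.length_eq_zero_iff.1 hm))
    have h₁ := hf.apply_one_eq hg hz
    obtain ⟨rfl, htail⟩ := ih hf.tail (h₁ ▸ hg.tail)
    refine ⟨rfl, fun k hk => ?_⟩
    rcases k with _ | k
    · rw [hf.apply_zero, hg.apply_zero]
    · exact htail k (by omega)

end IsHNChain

theorem IsLatticeCharge.exists_isHNChain [WellFoundedLT L] [WellFoundedGT L]
    (hz : IsLatticeCharge z) (a : L) : ∃ n f, IsHNChain z a n f := by
  induction a using WellFoundedGT.induction with
  | ind a ih =>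
  rcases (le_top : a ≤ ⊤).eq_or_lt with rfl | ha
  · exact ⟨0, fun _ => ⊤, rfl, rfl, by simp, by simp⟩
  obtain ⟨c, hac, hc, hcy⟩ := hz.exists_maxDestabilizing ha
  obtain ⟨m, g, hg⟩ := ih c hac
  refine ⟨m + 1, fun | 0 => a | k + 1 => g k, rfl, hg.apply_length, ?_, ?_⟩
  · rintro (_ | k) hk
    · show IsSemistableInterval z a (g 0)
      rw [hg.apply_zero]
      exact ⟨hac, fun x hax _ => hc x hax⟩
    · exact hg.semistable k (by omega)
  · rintro (_ | k) hk
    · show phase z (g 0) (g 1) < phase z a (g 0)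
      have hc₁ : c < g 1 := hg.apply_zero ▸ hg.lt (by omega)
      rw [hg.apply_zero]
      exact hz.phase_lt_of_phase_lt hac hc₁ (hcy _ hc₁)
    · exact hg.phase_lt k (by omega)

end Lattice

section Subobjects

variable {C : Type*} [Category C] [Abelian C] {V : C}

lemma isZero_cokernel_ofLE_iff {a b : Subobject V} (h : a ≤ b) :
    IsZero (cokernel (Subobject.ofLE a b h)) ↔ a = b := by
  constructor
  · intro hz
    have : Epi (Subobject.ofLE a b h) := Preadditive.epi_of_isZero_cokernel _ hz
    have : IsIso (Subobject.ofLE a b h) := isIso_of_mono_of_epi _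
    exact le_antisymm h (Subobject.le_of_comm (inv (Subobject.ofLE a b h)) (by simp))
  · rintro rfl
    rw [Subobject.ofLE_refl]
    exact isZero_cokernel_of_epi _

lemma isPullback_ofLE_inf_sup (a b : Subobject V) :
    IsPullback (Subobject.ofLE (a ⊓ b) a inf_le_left) (Subobject.ofLE (a ⊓ b) b inf_le_right)
      (Subobject.ofLE a (a ⊔ b) le_sup_left) (Subobject.ofLE b (a ⊔ b) le_sup_right) :=
  IsPullback.of_bot (v₂₁ := 𝟙 _) (v₂₂ := (a ⊔ b).arrow) (h₃₁ := b.arrow)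
    (by simpa using Subobject.inf_isPullback a b) (by simp)
    (IsPullback.of_vert_isIso_mono ⟨by simp⟩)

lemma epi_biprod_desc_ofLE_sup (a b : Subobject V) :
    Epi (biprod.desc (Subobject.ofLE a (a ⊔ b) le_sup_left)
      (-Subobject.ofLE b (a ⊔ b) le_sup_right)) := by
  set g := biprod.desc (Subobject.ofLE a (a ⊔ b) le_sup_left)
    (-Subobject.ofLE b (a ⊔ b) le_sup_right)
  set m := Abelian.image.ι g ≫ (a ⊔ b).arrow
  have ha : a ≤ Subobject.mk m :=
    Subobject.le_mk_of_comm (biprod.inl ≫ Abelian.factorThruImage g) (by simp [m, g])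
  have hb : b ≤ Subobject.mk m :=
    Subobject.le_mk_of_comm (-(biprod.inr ≫ Abelian.factorThruImage g)) (by simp [m, g])
  have hsplit : Subobject.ofLEMk _ m (sup_le ha hb) ≫ Abelian.image.ι g = 𝟙 _ := by
    rw [← cancel_mono (a ⊔ b).arrow]
    simp [m]
  have : IsSplitEpi (Abelian.image.ι g) := ⟨⟨⟨_, hsplit⟩⟩⟩
  rw [← Abelian.image.fac g]
  exact epi_comp _ _

lemma shortExact_pullback_cokernel {A B : C} (f : A ⟶ B) [Mono f] (E : Subobject (cokernel f)) :
    (ShortComplex.mk (pullback.lift 0 f (by simp) : A ⟶ pullback E.arrow (cokernel.π f))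
      (pullback.fst _ _) (pullback.lift_fst _ _ _)).ShortExact := by
  have : Mono (pullback.lift 0 f (by simp) : A ⟶ pullback E.arrow (cokernel.π f)) :=
    mono_of_mono_fac (pullback.lift_snd _ _ _)
  refine { exact := ?_ }
  rw [ShortComplex.exact_iff_exact_up_to_refinements]
  intro T x hx
  have hx' : (x ≫ pullback.snd _ _) ≫ cokernel.π f = 0 := by
    rw [Category.assoc, ← pullback.condition, ← Category.assoc]
    simp_all
  refine ⟨T, 𝟙 T, inferInstance, Abelian.monoLift f _ hx', ?_⟩
  apply pullback.hom_ext
  · rw [Category.id_comp, Category.assoc, pullback.lift_fst, comp_zero]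
    exact hx
  · rw [Category.id_comp, Category.assoc, pullback.lift_snd, Abelian.monoLift_comp]

end Subobjects

end HarderNarasimhan

namespace Filtration

variable {C : Type*} [Category C] [Abelian C] {V : C}

def ofChain (n : ℕ) (f : ℕ → Subobject V) (h₀ : f 0 = ⊥) (hn : f n = ⊤)
    (hlt : ∀ k < n, f k < f (k + 1)) : Filtration V where
  n := n
  F i := f i
  bot_eq := h₀
  top_eq := hn
  lt i := hlt i i.isLt

lemma F_clamp (Φ : Filtration V) {k : ℕ} (hk : k ≤ Φ.n) :
    Φ.F (Fin.clamp k Φ.n) = Φ.F ⟨k, by omega⟩ :=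
  congrArg Φ.F (Fin.ext (min_eq_left hk))

end Filtration

open HarderNarasimhan

namespace IsCentralCharge

variable {C : Type*} [Category C] [Abelian C] {Z : C → ℂ} (hZ : IsCentralCharge Z) {V : C}
include hZ

lemma apply_eq_zero {X : C} (hX : IsZero X) : Z X = 0 :=
  left_eq_add.1 (hZ.1 _ (ShortComplex.Splitting.ofIsZeroOfIsIso
    (ShortComplex.mk (0 : X ⟶ X) (𝟙 X) (by simp)) hX inferInstance).shortExact)

open ZeroObject in
lemma apply_eq_of_iso {X Y : C} (e : X ≅ Y) : Z X = Z Y := by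
  have h := hZ.1 _ (ShortComplex.Splitting.ofIsZeroOfIsIso
    (ShortComplex.mk (0 : (0 : C) ⟶ X) e.hom (by simp)) (isZero_zero C) inferInstance).shortExact
  rwa [hZ.apply_eq_zero (isZero_zero C), zero_add] at h

lemma apply_cokernel_ofLE {a b : Subobject V} (h : a ≤ b) :
    Z (cokernel (Subobject.ofLE a b h)) = Z b - Z a := by
  have hS : (ShortComplex.mk (Subobject.ofLE a b h) (cokernel.π _)
      (cokernel.condition _)).ShortExact :=
    { exact := ShortComplex.exact_of_g_is_cokernel _ (cokernelIsCokernel _) }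
  rw [hZ.1 _ hS]
  ring

lemma memHPlus_sub {a b : Subobject V} (hab : a < b) : memHPlus (Z b - Z a) := by
  rw [← hZ.apply_cokernel_ofLE hab.le]
  exact hZ.2 _ (mt (isZero_cokernel_ofLE_iff hab.le).1 hab.ne)

lemma sup_sub_eq (a b : Subobject V) : Z ↑(a ⊔ b) - Z b = Z a - Z ↑(a ⊓ b) := by
  have sq := isPullback_ofLE_inf_sup a b
  have h₁ : Z ((a : C) ⊞ (b : C)) = Z ↑(a ⊓ b) + Z ↑(a ⊔ b) := hZ.1 _
    { exact := sq.exact_shortComplex'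
      mono_f := sq.mono_shortComplex'_f
      epi_g := epi_biprod_desc_ofLE_sup a b }
  have h₂ := hZ.1 _ (ShortComplex.Splitting.ofHasBinaryBiproduct (a : C) (b : C)).shortExact
  linear_combination h₂ - h₁

lemma isLatticeCharge (V : C) : IsLatticeCharge (fun s : Subobject V => Z s) :=
  ⟨fun _ _ => hZ.memHPlus_sub, hZ.sup_sub_eq⟩

lemma isSemistableInterval_of_isSemistable {a b : Subobject V} (h : a ≤ b)
    (hss : IsSemistable Z (cokernel (Subobject.ofLE a b h))) :
    IsSemistableInterval (fun s : Subobject V => Z s) a b := by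
  refine ⟨h.lt_of_ne fun hab => hss.1 ((isZero_cokernel_ofLE_iff h).2 hab), fun c hac hcb => ?_⟩
  have sq : IsPullback (Subobject.ofLE a c hac.le) (𝟙 _) (Subobject.ofLE c b hcb)
      (Subobject.ofLE a b h) := IsPullback.of_vert_isIso_mono ⟨by simp⟩
  have := Abelian.mono_cokernel_map_of_isPullback sq
  set E := Subobject.mk (cokernel.map _ _ _ _ sq.w)
  have hE : Z E = Z c - Z a :=
    (hZ.apply_eq_of_iso (Subobject.underlyingIso _)).trans (hZ.apply_cokernel_ofLE hac.le)
  have hE₀ : ¬ IsZero (E : C) := fun hE₀ =>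
    ne_zero_of_memHPlus (hZ.memHPlus_sub hac) (hE ▸ hZ.apply_eq_zero hE₀)
  have hle := hss.2 E hE₀
  rwa [hE, hZ.apply_cokernel_ofLE,
    argLE_iff_arg_le (hZ.memHPlus_sub hac) (hZ.memHPlus_sub (hac.trans_le hcb))] at hle

lemma isSemistable_of_isSemistableInterval {a b : Subobject V} (h : a ≤ b)
    (hss : IsSemistableInterval (fun s : Subobject V => Z s) a b) :
    IsSemistable Z (cokernel (Subobject.ofLE a b h)) := by
  refine ⟨mt (isZero_cokernel_ofLE_iff h).1 hss.1.ne, fun E hE₀ => ?_⟩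
  have hS := shortExact_pullback_cokernel (Subobject.ofLE a b h) E
  set c := Subobject.mk (pullback.snd E.arrow (cokernel.π (Subobject.ofLE a b h)) ≫ b.arrow)
  have hE : Z E = Z c - Z a := by
    rw [hZ.apply_eq_of_iso (Subobject.underlyingIso _), hZ.1 _ hS]
    ring
  have hac : a < c := by
    refine (Subobject.le_mk_of_comm (pullback.lift 0 (Subobject.ofLE a b h) (by simp)) ?_).lt_of_ne
      fun hac => ne_zero_of_memHPlus (hZ.2 _ hE₀) (by rw [hE, hac, sub_self])
    rw [← Category.assoc, pullback.lift_snd, Subobject.ofLE_arrow]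
  have hcb : c ≤ b := Subobject.mk_le_of_comm _ rfl
  rw [hE, hZ.apply_cokernel_ofLE,
    argLE_iff_arg_le (hZ.memHPlus_sub hac) (hZ.memHPlus_sub hss.1)]
  exact hss.2 c hac hcb

lemma isSemistable_cokernel_iff {a b : Subobject V} (h : a ≤ b) :
    IsSemistable Z (cokernel (Subobject.ofLE a b h)) ↔
      IsSemistableInterval (fun s : Subobject V => Z s) a b :=
  ⟨hZ.isSemistableInterval_of_isSemistable h, hZ.isSemistable_of_isSemistableInterval h⟩

lemma argLT_quot_iff (Φ : Filtration V) (i j : Fin Φ.n) :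
    argLT (Z (Φ.quot j)) (Z (Φ.quot i)) ↔
      phase (fun s : Subobject V => Z s) (Φ.F j.castSucc) (Φ.F j.succ) <
        phase (fun s : Subobject V => Z s) (Φ.F i.castSucc) (Φ.F i.succ) := by
  rw [Filtration.quot, Filtration.quot, hZ.apply_cokernel_ofLE, hZ.apply_cokernel_ofLE,
    argLT_iff_arg_lt (hZ.memHPlus_sub (Φ.lt j)) (hZ.memHPlus_sub (Φ.lt i))]
  rfl

lemma isHNFiltration_ofChain {n : ℕ} {f : ℕ → Subobject V}
    (hf : IsHNChain (fun s : Subobject V => Z s) ⊥ n f) (hn : 1 ≤ n) :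
    IsHNFiltration Z (Filtration.ofChain n f hf.apply_zero hf.apply_length fun _ => hf.lt) := by
  refine ⟨hn, fun i => (hZ.isSemistable_cokernel_iff _).2 (hf.semistable i i.isLt),
    fun i j hij => (hZ.argLT_quot_iff _ i j).2 ?_⟩
  show phase _ (f j) (f (j + 1)) < phase _ (f i) (f (i + 1))
  rw [← hij]
  exact hf.phase_lt i (by rw [hij]; exact j.isLt)

lemma isHNChain_of_isHNFiltration {Φ : Filtration V} (hΦ : IsHNFiltration Z Φ) :
    IsHNChain (fun s : Subobject V => Z s) ⊥ Φ.n (fun k => Φ.F (Fin.clamp k Φ.n)) where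
  apply_zero := (Φ.F_clamp (Nat.zero_le _)).trans Φ.bot_eq
  apply_length := (Φ.F_clamp le_rfl).trans Φ.top_eq
  semistable k hk := by
    rw [Φ.F_clamp hk.le, Φ.F_clamp hk]
    exact (hZ.isSemistable_cokernel_iff _).1 (hΦ.2.1 ⟨k, hk⟩)
  phase_lt k hk := by
    rw [Φ.F_clamp (by omega), Φ.F_clamp (by omega), Φ.F_clamp (by omega)]
    exact (hZ.argLT_quot_iff Φ _ _).1 (hΦ.2.2 ⟨k, by omega⟩ ⟨k + 1, hk⟩ rfl)

end IsCentralCharge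

/-- In an abelian category with a central charge in which all objects are Noetherian
and Artinian, every nonzero object admits a Harder–Narasimhan filtration, which is
unique: any two such filtrations have the same length and the same subobjects. -/
theorem existsUnique_harderNarasimhan_filtration {C : Type*} [Category C] [Abelian C]
    (Z : C → ℂ) (hZ : IsCentralCharge Z)
    (hNoeth : ∀ X : C, WellFoundedGT (Subobject X))
    (hArt : ∀ X : C, WellFoundedLT (Subobject X))
    (V : C) (hV : ¬ IsZero V) :
    ∃ Φ : Filtration V, IsHNFiltration Z Φ ∧
      ∀ Ψ : Filtration V, IsHNFiltration Z Ψ →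
        Ψ.n = Φ.n ∧ Set.range Ψ.F = Set.range Φ.F := by
  have := hNoeth V
  have := hArt V
  have := Subobject.nontrivial_of_not_isZero hV
  have hz := hZ.isLatticeCharge V
  obtain ⟨n, f, hf⟩ := hz.exists_isHNChain ⊥
  have hn : 1 ≤ n := Nat.one_le_iff_ne_zero.2 fun h => bot_ne_top (hf.length_eq_zero_iff.1 h)
  refine ⟨_, hZ.isHNFiltration_ofChain hf hn, fun ⟨m, G, _, _, _⟩ hΨ => ?_⟩
  obtain ⟨rfl, hGf⟩ := (hZ.isHNChain_of_isHNFiltration hΨ).unique hf hz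
  refine ⟨rfl, congrArg Set.range (funext fun i => ?_)⟩
  have h := hGf i i.is_le
  rwa [show Fin.clamp i m = i from Fin.ext (min_eq_left i.is_le)] at h
end

section
/- For every integer m, the power series A_m ∈ K[[t]] satisfies the functional equation A_m(q² t) − A_m(t) = q^{m+1} · t · A_m(q^{2m} t), i.e. for every d ≥ 1 the d-th coefficients satisfy (q^{2d} − 1)·a_d = q^{m+1}·q^{2m(d−1)}·a_{d−1}, where a_d = q^{m d² + d}·(∏_{i=1}^{d}(q^{2i} − 1))^{−1}. -/
/-- The variable `q` of `K = ℚ(q)`, playing the role of `𝕃^{1/2}`. -/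
noncomputable def q : RatFunc ℚ := RatFunc.X

/-- The `d`-th coefficient `q^{m d² + d} / ∏_{i=1}^{d} (q^{2i} - 1)` of the generating
series of the stack of representations of the `m`-loop quiver. -/
noncomputable def a (m : ℤ) (d : ℕ) : RatFunc ℚ :=
  q ^ (m * (d : ℤ) ^ 2 + (d : ℤ)) * (∏ i ∈ Finset.Icc 1 d, (q ^ (2 * i) - 1))⁻¹

/-- The generating series `A_m(t) = Σ_d a_d t^d` of the `m`-loop quiver. -/
noncomputable def A (m : ℤ) : PowerSeries (RatFunc ℚ) := PowerSeries.mk (a m)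

/-! The recursion `(q^{2(d+1)} - 1) a_{d+1} = q^{m+1} (q^{2m})^d a_d` follows from
`m (d+1)² + (d+1) = (m d² + d) + 2 m d + (m + 1)` and peeling the last factor off the product;
comparing coefficients turns it into the functional equation. -/

namespace PowerSeries

variable {R : Type*} [CommRing R]

theorem rescale_mk_sub_mk_eq_C_mul_X_mul_rescale_mk {f : ℕ → R} {c b e : R}
    (h : ∀ d, (c ^ (d + 1) - 1) * f (d + 1) = b * e ^ d * f d) :
    rescale c (mk f) - mk f = C b * X * rescale e (mk f) := by
  ext n
  rw [mul_comm (C b), mul_assoc, map_sub, coeff_rescale, coeff_mk]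
  cases n with
  | zero => rw [coeff_zero_X_mul, pow_zero, one_mul, sub_self]
  | succ d => rw [coeff_succ_X_mul, coeff_C_mul, coeff_rescale, coeff_mk, ← mul_assoc, ← h,
      sub_one_mul]

end PowerSeries

lemma q_ne_zero : q ≠ 0 := RatFunc.X_ne_zero

lemma q_pow_sub_one_ne_zero {n : ℕ} (hn : n ≠ 0) : q ^ n - 1 ≠ 0 := by
  have h := RatFunc.algebraMap_ne_zero (Polynomial.X_pow_sub_C_ne_zero (Nat.pos_of_ne_zero hn)
    (1 : ℚ))
  simpa [q, RatFunc.algebraMap_X] using h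

lemma a_succ (m : ℤ) (d : ℕ) :
    a m (d + 1) = q ^ (m + 1) * (q ^ (2 * m)) ^ d * a m d / (q ^ (2 * (d + 1)) - 1) := by
  have hexp : m * ((d + 1 : ℕ) : ℤ) ^ 2 + ((d + 1 : ℕ) : ℤ)
      = (m + 1) + 2 * m * d + (m * (d : ℤ) ^ 2 + d) := by
    push_cast; ring
  rw [a, a, hexp, zpow_add₀ q_ne_zero, zpow_add₀ q_ne_zero, zpow_mul, zpow_natCast,
    Finset.prod_Icc_succ_top (by omega), mul_inv]
  ring

lemma sub_one_mul_a_succ (m : ℤ) (d : ℕ) :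
    (q ^ (2 * (d + 1)) - 1) * a m (d + 1) = q ^ (m + 1) * (q ^ (2 * m)) ^ d * a m d := by
  rw [a_succ, mul_div_cancel₀ _ (q_pow_sub_one_ne_zero (by omega))]

/-- The functional equation `A_m(q² t) − A_m(t) = q^{m+1} · t · A_m(q^{2m} t)`,
equivalently, `(q^{2d} − 1)·a_d = q^{m+1}·q^{2m(d−1)}·a_{d−1}` for all `d ≥ 1`. -/
theorem A_functional_equation (m : ℤ) :
    (PowerSeries.rescale (q ^ 2) (A m) - A m =
      PowerSeries.C (q ^ (m + 1)) * PowerSeries.X *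
        PowerSeries.rescale (q ^ (2 * m)) (A m)) ∧
    (∀ d : ℕ, 1 ≤ d →
      (q ^ (2 * d) - 1) * a m d =
        q ^ (m + 1) * q ^ (2 * m * ((d : ℤ) - 1)) * a m (d - 1)) := by
  refine ⟨PowerSeries.rescale_mk_sub_mk_eq_C_mul_X_mul_rescale_mk fun d => ?_, fun d hd => ?_⟩
  · rw [← pow_mul, sub_one_mul_a_succ]
  · obtain ⟨d, rfl⟩ := Nat.exists_eq_add_of_le' hd
    rw [sub_one_mul_a_succ, Nat.add_sub_cancel, Nat.cast_add_one, add_sub_cancel_right,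
      ← zpow_natCast, ← zpow_mul]
end

section
/- For every natural number m, the series B_m(t) := A_m(q² t)·A_m(t)^{−1} ∈ K[[t]] satisfies the functional equation B_m(t) = 1 + q^{m+1} · t · ∏_{i=0}^{m−1} B_m(q^{2i} t). -/
/-- `B_m(t) := A_m(q² t) / A_m(t)`. -/
noncomputable def B (m : ℕ) : PowerSeries (RatFunc ℚ) :=
  PowerSeries.rescale (q ^ 2) (A m) * (A m)⁻¹

open PowerSeries

theorem RatFunc.X_pow_ne_one {K : Type*} [Field K] {k : ℕ} (hk : 0 < k) :
    (RatFunc.X : RatFunc K) ^ k ≠ 1 := fun h =>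
  RatFunc.transcendental_X.pow hk (h ▸ isAlgebraic_one)

namespace PowerSeries

theorem constantCoeff_rescale {R : Type*} [CommSemiring R] (c : R) (f : R⟦X⟧) :
    constantCoeff (rescale c f) = constantCoeff f := by
  rw [← coeff_zero_eq_constantCoeff_apply, coeff_rescale, pow_zero, one_mul,
    coeff_zero_eq_constantCoeff_apply]

theorem rescale_inv {k : Type*} [Field k] (c : k) (f : k⟦X⟧) :
    rescale c f⁻¹ = (rescale c f)⁻¹ := by
  by_cases hf : constantCoeff f = 0
  · rw [(PowerSeries.inv_eq_zero).mpr hf, map_zero, eq_comm, PowerSeries.inv_eq_zero,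
      constantCoeff_rescale, hf]
  · rw [eq_inv_iff_mul_eq_one (by rwa [constantCoeff_rescale]), ← map_mul,
      PowerSeries.inv_mul_cancel f hf, map_one]

theorem prod_range_rescale_pow_rescale_mul_inv {k : Type*} [Field k] (c : k) (f : k⟦X⟧)
    (hf : constantCoeff f ≠ 0) (n : ℕ) :
    ∏ i ∈ Finset.range n, rescale (c ^ i) (rescale c f * f⁻¹) = rescale (c ^ n) f * f⁻¹ := by
  induction n with
  | zero => rw [Finset.prod_range_zero, pow_zero, rescale_one, RingHom.id_apply,
      PowerSeries.mul_inv_cancel f hf]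
  | succ n ih =>
    have hcancel : rescale (c ^ n) f * (rescale (c ^ n) f)⁻¹ = 1 :=
      PowerSeries.mul_inv_cancel _ (by rwa [constantCoeff_rescale])
    rw [Finset.prod_range_succ, ih, map_mul, rescale_inv, rescale_rescale, ← pow_succ']
    linear_combination (rescale (c ^ (n + 1)) f * f⁻¹) * hcancel

end PowerSeries

lemma q_pow_sub_one_mul_a_succ (m : ℤ) (n : ℕ) :
    (q ^ (2 * (n + 1)) - 1) * a m (n + 1) = q ^ (2 * m * n + m + 1) * a m n := by
  have hq : q ≠ 0 := RatFunc.X_ne_zero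
  have hne : q ^ (2 * (n + 1)) - 1 ≠ 0 := sub_ne_zero.mpr (RatFunc.X_pow_ne_one (by omega))
  have hP : ∏ i ∈ Finset.Icc 1 n, (q ^ (2 * i) - 1) ≠ 0 := Finset.prod_ne_zero_iff.mpr
    fun i hi => sub_ne_zero.mpr (RatFunc.X_pow_ne_one (by grind))
  rw [a, a, Finset.prod_Icc_succ_top (by omega)]
  field_simp
  rw [← zpow_add₀ hq]
  congr 1
  push_cast
  ring

lemma constantCoeff_A (m : ℤ) : constantCoeff (A m) = 1 := by
  simp [A, a]

lemma rescale_q_sq_A (m : ℕ) :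
    rescale (q ^ 2) (A m) = A m + C (q ^ (m + 1)) * X * rescale ((q ^ 2) ^ m) (A m) := by
  ext (_ | n)
  · simp [A]
  · have hpow : q ^ (2 * (m : ℤ) * n + m + 1) = q ^ (m + 1) * ((q ^ 2) ^ m) ^ n := by
      rw [← pow_mul, ← pow_mul, ← pow_add, ← zpow_natCast]
      push_cast
      ring_nf
    rw [map_add, mul_assoc, coeff_C_mul, coeff_succ_X_mul]
    simp only [A, coeff_rescale, coeff_mk]
    linear_combination q_pow_sub_one_mul_a_succ m n + a m n * hpow

/-- The functional equation `B_m(t) = 1 + q^{m+1} · t · ∏_{i=0}^{m-1} B_m(q^{2i} t)`. -/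
theorem B_functional_equation (m : ℕ) :
    B m = 1 + PowerSeries.C (R := RatFunc ℚ) (q ^ (m + 1)) * PowerSeries.X *
      ∏ i ∈ Finset.range m, PowerSeries.rescale (q ^ (2 * i)) (B m) := by
  have hA : constantCoeff (A m) ≠ 0 := by rw [constantCoeff_A]; exact one_ne_zero
  have htelescope : ∏ i ∈ Finset.range m, rescale (q ^ (2 * i)) (B m)
      = rescale ((q ^ 2) ^ m) (A m) * (A m)⁻¹ := by
    simp_rw [pow_mul]
    exact prod_range_rescale_pow_rescale_mul_inv _ _ hA m
  rw [htelescope, B, rescale_q_sq_A, add_mul, PowerSeries.mul_inv_cancel _ hA]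
  ring
end

section
/- Let β ∈ ℚ[[t]] satisfy β = 1 − t·β² (such a power series exists, is unique, and has constant term 1; it is the Euler-characteristic specialization of the Donaldson–Thomas series of the 2-loop quiver). Then 2·t·β'(t) = β(t) · Σ_{n≥1} (−1)^n·binom(2n, n)·t^n in ℚ[[t]], where β' denotes the formal derivative of β and binom(2n, n) is the central binomial coefficient. (Equivalently, t·(log β)' = (1/2)((1+4t)^{−1/2} − 1), which underlies the computation of the numerical DT invariants Ω^{(2)}_d of the 2-loop quiver.) -/
/-!
Put `w = 1 + 2 t β`. The relation `β = 1 - t β²` gives `w² = 1 + 4t`, and differentiating it gives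
`w β' = -β²`. The series `S = Σ (-1)ⁿ binom(2n, n) tⁿ` satisfies `(1 + 4t) S' = -2 S`, so
`(1 + 4t) S²` has derivative zero and constant term one; hence `(w S)² = 1` and `w S = 1`.
Multiplying the claim by `w` reduces it to the polynomial identity `-2tβ² = β (1 - w)`.
-/

namespace PowerSeries

variable {R : Type*}

theorem coeff_X_mul_derivative [CommSemiring R] (f : R⟦X⟧) (n : ℕ) :
    coeff n (X * d⁄dX R f) = n * coeff n f := by
  cases n with
  | zero => simp
  | succ n => rw [coeff_succ_X_mul, coeff_derivative, mul_comm]; push_cast; rfl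

section CommRing

variable (R) [CommRing R]

/-- The expansion of `(1 + 4X)^(-1/2)`. -/
noncomputable def altCentralBinomSeries : R⟦X⟧ :=
  mk fun n => (-1) ^ n * (n.centralBinom : R)

theorem one_add_four_X_mul_derivative_altCentralBinomSeries :
    (1 + 4 * X) * d⁄dX R (altCentralBinomSeries R) = -2 * altCentralBinomSeries R := by
  ext n
  have hrec : ((n + 1 : ℕ) * (n + 1).centralBinom : R) = 2 * (2 * n + 1) * n.centralBinom := by
    exact_mod_cast congrArg (Nat.cast : ℕ → R) (Nat.succ_mul_centralBinom_succ n)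
  have hfour : (4 : R⟦X⟧) = C 4 := (map_ofNat C 4).symm
  have hmtwo : (-2 : R⟦X⟧) = C (-2) := by rw [map_neg, map_ofNat]
  rw [add_mul, one_mul, mul_assoc, map_add, hfour, coeff_C_mul, coeff_X_mul_derivative,
    coeff_derivative, hmtwo, coeff_C_mul]
  simp only [altCentralBinomSeries, coeff_mk]
  push_cast at hrec
  linear_combination (-1 : R) ^ (n + 1) * hrec

theorem altCentralBinomSeries_sq_mul [IsAddTorsionFree R] :
    altCentralBinomSeries R ^ 2 * (1 + 4 * X) = 1 := by
  apply derivative.ext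
  · have hlin : d⁄dX R (1 + 4 * X : R⟦X⟧) = 4 := by
      ext n
      rw [coeff_derivative]
      cases n <;> simp [coeff_one, ← map_ofNat C 4, coeff_C]
    rw [Derivation.leibniz, Derivation.leibniz_pow, hlin, Derivation.map_one_eq_zero]
    simp only [smul_eq_mul, nsmul_eq_mul]
    linear_combination 2 * altCentralBinomSeries R *
      one_add_four_X_mul_derivative_altCentralBinomSeries R
  · simp [altCentralBinomSeries]

theorem altCentralBinomSeries_sub_one :
    altCentralBinomSeries R - 1 =
      mk fun n => if n = 0 then 0 else (-1) ^ n * ((2 * n).choose n : R) := by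
  ext n
  cases n <;> simp [altCentralBinomSeries, Nat.centralBinom_eq_two_mul_choose, coeff_one]

variable {R} [IsDomain R]

theorem eq_one_of_sq_eq_one {f : R⟦X⟧} (hsq : f ^ 2 = 1) (hc : constantCoeff f = 1) : f = 1 := by
  rcases sq_eq_one_iff.mp hsq with h | h
  · exact h
  · rw [h, map_neg, map_one] at hc
    rw [h, ← map_one C, ← map_neg C]
    exact congrArg C hc

theorem mul_altCentralBinomSeries_eq_one [IsAddTorsionFree R] {w : R⟦X⟧}
    (hsq : w ^ 2 = 1 + 4 * X) (hc : constantCoeff w = 1) : w * altCentralBinomSeries R = 1 := by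
  refine eq_one_of_sq_eq_one ?_ (by simp [hc, altCentralBinomSeries])
  rw [mul_pow, hsq, mul_comm, altCentralBinomSeries_sq_mul]

end CommRing

end PowerSeries

open PowerSeries

/-- Let `β ∈ ℚ[[t]]` satisfy `β = 1 − t β²` (the Euler-characteristic specialization of
the DT series of the 2-loop quiver). Then
`2 t β′(t) = β(t) · Σ_{n ≥ 1} (−1)ⁿ (2n choose n) tⁿ`. -/
theorem two_loop_logderivative (β : PowerSeries ℚ)
    (hβ : β = 1 - PowerSeries.X * β ^ 2) :
    2 * PowerSeries.X * PowerSeries.derivativeFun β =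
      β * PowerSeries.mk
        (fun n => if n = 0 then 0 else ((-1) ^ n * (Nat.choose (2 * n) n) : ℚ)) := by
  change 2 * X * d⁄dX ℚ β = _
  rw [← altCentralBinomSeries_sub_one]
  set w : ℚ⟦X⟧ := 1 + 2 * X * β
  have hsq : w ^ 2 = 1 + 4 * X := by linear_combination 4 * X * hβ
  have hinv : w * altCentralBinomSeries ℚ = 1 :=
    mul_altCentralBinomSeries_eq_one hsq (by simp [w])
  have hderiv : w * d⁄dX ℚ β = -β ^ 2 := by
    have h := congrArg (d⁄dX ℚ) hβ
    rw [map_sub, Derivation.map_one_eq_zero, Derivation.leibniz, Derivation.leibniz_pow,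
      derivative_X] at h
    simp only [smul_eq_mul, nsmul_eq_mul] at h
    linear_combination h
  apply mul_right_cancel₀ (left_ne_zero_of_mul_eq_one hinv)
  linear_combination 2 * X * hderiv - β * hinv
end

section
/- For all natural numbers e₁, e₂, the following identity holds in ℚ(q): q^{e₁·e₂}·A(e₁)·A(e₂) = Σ_{c=0}^{min(e₁, e₂)} q^{−(e₁−c)·c − (e₁−c)·(e₂−c) − c·(e₂−c)}·A(e₁−c)·A(c)·A(e₂−c), where A(d) := q^d·(∏_{i=1}^{d}(q^{2i} − 1))^{−1}. (This is the coefficientwise form of the quantum dilogarithm identity A^{(0)}(t₂)∗A^{(0)}(t₁) = A^{(0)}(t₁)∗A^{(0)}(t₁t₂)∗A^{(0)}(t₂) in the quantum torus of the A₂ quiver, i.e. the wall-crossing identity for the quiver • → •.) -/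
/-- The `d`-th coefficient `A(d) = q^d / ∏_{i=1}^{d}(q^{2i} − 1)` of the quantum
dilogarithm series `A^{(0)}(t)`, as an element of `ℚ(q)`. -/
noncomputable def Aq (d : ℕ) : RatFunc ℚ :=
  RatFunc.X ^ d * (∏ i ∈ Finset.Icc 1 d, (RatFunc.X ^ (2 * i) - 1))⁻¹

/-!
With `Q = q²` and `P(d) = ∏_{i=1}^{d} (Q^i - 1)`, clearing denominators turns the identity into
`Σ_c Q^{c(c-1)/2} / (P(c) P(e₁-c) P(e₂-c)) = Q^{e₁e₂} / (P(e₁) P(e₂))`, that is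
`(Q^{e₂})^{e₁} = Σ_c [e₁ c]_Q (Q^{e₂} - 1)(Q^{e₂} - Q) ⋯ (Q^{e₂} - Q^{c-1})`.
This is the q-analogue `x^n = Σ_k [n k]_Q (x - 1)(x - Q) ⋯ (x - Q^{k-1})` of the binomial
expansion `x^n = (1 + (x - 1))^n`, evaluated at `x = Q^{e₂}`, where the terms with `k > e₂`
vanish; it follows by induction on `n` from the q-Pascal rule.
-/

open Finset

section CommRing

variable {R : Type*} [CommRing R] (q : R)

/-- `∏_{i=1}^{d} (q^i - 1) = (-1)^d (q; q)_d`. -/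
def qPoch (d : ℕ) : R := ∏ i ∈ Icc 1 d, (q ^ i - 1)

@[simp]
lemma qPoch_zero : qPoch q 0 = 1 := by simp [qPoch]

lemma qPoch_succ (d : ℕ) : qPoch q (d + 1) = qPoch q d * (q ^ (d + 1) - 1) :=
  prod_Icc_succ_top (by omega) _

def qBinom : ℕ → ℕ → R
  | _, 0 => 1
  | 0, _ + 1 => 0
  | n + 1, k + 1 => qBinom n k + q ^ (k + 1) * qBinom n (k + 1)

@[simp]
lemma qBinom_zero_right (n : ℕ) : qBinom q n 0 = 1 := by cases n <;> rfl

lemma qBinom_succ_succ (n k : ℕ) :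
    qBinom q (n + 1) (k + 1) = qBinom q n k + q ^ (k + 1) * qBinom q n (k + 1) := rfl

lemma qBinom_eq_zero_of_lt {n k : ℕ} (h : n < k) : qBinom q n k = 0 := by
  induction n generalizing k with
  | zero =>
    obtain ⟨k, rfl⟩ : ∃ k', k = k' + 1 := ⟨k - 1, by omega⟩
    rfl
  | succ n ih =>
    obtain ⟨k, rfl⟩ : ∃ k', k = k' + 1 := ⟨k - 1, by omega⟩
    rw [qBinom_succ_succ, ih (by omega), ih (by omega), mul_zero, add_zero]

lemma qBinom_mul_qPoch_mul_qPoch {n k : ℕ} (h : k ≤ n) :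
    qBinom q n k * qPoch q k * qPoch q (n - k) = qPoch q n := by
  induction n generalizing k with
  | zero => obtain rfl := Nat.le_zero.mp h; simp
  | succ n ih =>
    cases k with
    | zero => simp
    | succ k =>
      rcases (Nat.le_of_lt_succ h).eq_or_lt with rfl | hk
      · have hk : qBinom q k k * qPoch q k = qPoch q k := by simpa using ih le_rfl
        rw [qBinom_succ_succ, qBinom_eq_zero_of_lt q k.lt_succ_self, qPoch_succ]
        simp only [mul_zero, add_zero, Nat.sub_self, qPoch_zero, mul_one]
        linear_combination (q ^ (k + 1) - 1) * hk
      · obtain ⟨d, rfl⟩ := Nat.exists_eq_add_of_lt hk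
        have h₁ := ih hk.le
        have h₂ := ih hk
        rw [show k + d + 1 - k = d + 1 by omega] at h₁
        rw [show k + d + 1 - (k + 1) = d by omega] at h₂
        rw [qBinom_succ_succ, show k + d + 1 + 1 - (k + 1) = d + 1 by omega]
        simp only [qPoch_succ] at *
        linear_combination (q ^ (k + 1) - 1) * h₁ + q ^ (k + 1) * (q ^ (d + 1) - 1) * h₂

theorem pow_eq_sum_qBinom_mul_prod_sub_pow (x : R) (n : ℕ) :
    x ^ n = ∑ k ∈ range (n + 1), qBinom q n k * ∏ j ∈ range k, (x - q ^ j) := by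
  induction n with
  | zero => simp
  | succ n ih =>
    set π : ℕ → R := fun k => ∏ j ∈ range k, (x - q ^ j)
    have hπ (k : ℕ) : x * π k = π (k + 1) + q ^ k * π k := by
      simp only [π, prod_range_succ]
      ring
    have hlast : q ^ (n + 1) * qBinom q n (n + 1) * π (n + 1) = 0 := by
      rw [qBinom_eq_zero_of_lt q n.lt_succ_self, mul_zero, zero_mul]
    calc x ^ (n + 1)
        = ∑ k ∈ range (n + 1), (qBinom q n k * π (k + 1) + q ^ k * qBinom q n k * π k) := by
          rw [pow_succ', ih, mul_sum]
          exact sum_congr rfl fun k _ => by linear_combination qBinom q n k * hπ k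
      _ = ∑ k ∈ range (n + 1), qBinom q n k * π (k + 1) +
            ∑ k ∈ range (n + 1), q ^ (k + 1) * qBinom q n (k + 1) * π (k + 1) + π 0 := by
          rw [sum_add_distrib, sum_range_succ' (fun k => q ^ k * _ * _),
            sum_range_succ (fun k => q ^ (k + 1) * qBinom q n (k + 1) * π (k + 1)) n, hlast]
          simp only [pow_zero, qBinom_zero_right, one_mul, add_zero, add_assoc]
      _ = ∑ k ∈ range (n + 1 + 1), qBinom q (n + 1) k * π k := by
          rw [sum_range_succ' _ (n + 1), ← sum_add_distrib]
          simp only [qBinom_succ_succ, qBinom_zero_right, one_mul, add_mul, mul_assoc]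

lemma prod_range_pow_sub_pow_mul_qPoch {m c : ℕ} (h : c ≤ m) :
    (∏ j ∈ range c, (q ^ m - q ^ j)) * qPoch q (m - c) = q ^ c.choose 2 * qPoch q m := by
  induction c generalizing m with
  | zero => simp
  | succ c ih =>
    obtain ⟨m, rfl⟩ : ∃ m', m = m' + 1 := ⟨m - 1, by omega⟩
    have hshift : ∏ j ∈ range c, (q ^ (m + 1) - q ^ (j + 1)) =
        q ^ c * ∏ j ∈ range c, (q ^ m - q ^ j) := by
      simp only [pow_succ', ← mul_sub, prod_mul_distrib, prod_const, card_range]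
    rw [prod_range_succ', hshift, Nat.add_sub_add_right, Nat.choose_succ_succ',
      Nat.choose_one_right, qPoch_succ]
    linear_combination q ^ c * (q ^ (m + 1) - 1) * ih (m := m) (by omega)

lemma prod_range_pow_sub_pow_eq_zero {m c : ℕ} (h : m < c) :
    ∏ j ∈ range c, (q ^ m - q ^ j) = 0 :=
  prod_eq_zero (mem_range.2 h) (sub_self _)

end CommRing

lemma Transcendental.not_isOfFinOrder {R A : Type*} [CommRing R] [Nontrivial R] [Ring A]
    [Algebra R A] {x : A} (hx : Transcendental R x) : ¬IsOfFinOrder x := by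
  intro hfin
  obtain ⟨n, hn, hxn⟩ := isOfFinOrder_iff_pow_eq_one.1 hfin
  refine Polynomial.X_pow_sub_C_ne_zero hn (1 : R) (transcendental_iff.1 hx _ ?_)
  simp [hxn]

lemma two_mul_choose_two_add_self (c : ℕ) : 2 * c.choose 2 + c = c * c := by
  induction c with
  | zero => rfl
  | succ c ih =>
    rw [Nat.choose_succ_succ', Nat.choose_one_right]
    ring_nf at ih ⊢
    omega

section Field

variable {K : Type*} [Field K]

lemma qPoch_ne_zero {q : K} (hq : ¬IsOfFinOrder q) (d : ℕ) : qPoch q d ≠ 0 :=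
  prod_ne_zero_iff.2 fun i hi =>
    sub_ne_zero.2 fun h => hq (isOfFinOrder_iff_pow_eq_one.2 ⟨i, (mem_Icc.1 hi).1, h⟩)

theorem sum_pow_choose_two_div_qPoch {q : K} (hq : ¬IsOfFinOrder q) (n m : ℕ) :
    ∑ c ∈ range (min n m + 1),
        q ^ c.choose 2 / (qPoch q c * qPoch q (n - c) * qPoch q (m - c)) =
      q ^ (n * m) / (qPoch q n * qPoch q m) := by
  have hP := qPoch_ne_zero hq
  rw [mul_comm n m, pow_mul, pow_eq_sum_qBinom_mul_prod_sub_pow q, sum_div]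
  refine (sum_congr rfl fun c hc => ?_).trans
    (sum_subset (range_subset_range.2 (by omega)) fun c hc hcm => ?_)
  · rw [mem_range] at hc
    have hcn : c ≤ n := by omega
    have hcm : c ≤ m := by omega
    rw [div_eq_div_iff (mul_ne_zero (mul_ne_zero (hP c) (hP _)) (hP _))
      (mul_ne_zero (hP n) (hP m)), ← qBinom_mul_qPoch_mul_qPoch q hcn]
    linear_combination (-(qBinom q n c * qPoch q c * qPoch q (n - c))) *
      prod_range_pow_sub_pow_mul_qPoch q hcm
  · rw [mem_range] at hc hcm
    rw [prod_range_pow_sub_pow_eq_zero q (by omega), mul_zero, zero_div]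

def qDilogCoeff (t : K) (d : ℕ) : K := t ^ d / qPoch (t ^ 2) d

variable {t : K}

lemma pow_mul_qDilogCoeff_mul_qDilogCoeff (ht : t ≠ 0) (e₁ e₂ : ℕ) :
    t ^ (e₁ * e₂) * qDilogCoeff t e₁ * qDilogCoeff t e₂ =
      t ^ ((e₁ + e₂ : ℤ) - e₁ * e₂) *
        ((t ^ 2) ^ (e₁ * e₂) / (qPoch (t ^ 2) e₁ * qPoch (t ^ 2) e₂)) := by
  have hpow : t ^ (e₁ * e₂) * t ^ e₁ * t ^ e₂ =
      t ^ ((e₁ + e₂ : ℤ) - e₁ * e₂) * (t ^ 2) ^ (e₁ * e₂) := by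
    rw [← pow_mul]
    simp only [← zpow_natCast, ← zpow_add₀ ht]
    push_cast
    ring_nf
  simp only [qDilogCoeff, div_eq_mul_inv, mul_inv]
  linear_combination (qPoch (t ^ 2) e₁)⁻¹ * (qPoch (t ^ 2) e₂)⁻¹ * hpow

lemma zpow_mul_qDilogCoeff_mul_qDilogCoeff_mul_qDilogCoeff (ht : t ≠ 0) {e₁ e₂ c : ℕ}
    (hc₁ : c ≤ e₁) (hc₂ : c ≤ e₂) :
    t ^ (-(((e₁ - c) * c + (e₁ - c) * (e₂ - c) + c * (e₂ - c) : ℕ) : ℤ)) *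
        qDilogCoeff t (e₁ - c) * qDilogCoeff t c * qDilogCoeff t (e₂ - c) =
      t ^ ((e₁ + e₂ : ℤ) - e₁ * e₂) *
        ((t ^ 2) ^ c.choose 2 /
          (qPoch (t ^ 2) c * qPoch (t ^ 2) (e₁ - c) * qPoch (t ^ 2) (e₂ - c))) := by
  have hch : (2 * c.choose 2 + c : ℤ) = c * c := by
    exact_mod_cast two_mul_choose_two_add_self c
  have hpow : t ^ (-(((e₁ - c) * c + (e₁ - c) * (e₂ - c) + c * (e₂ - c) : ℕ) : ℤ)) *
        t ^ (e₁ - c) * t ^ c * t ^ (e₂ - c) =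
      t ^ ((e₁ + e₂ : ℤ) - e₁ * e₂) * (t ^ 2) ^ c.choose 2 := by
    rw [← pow_mul]
    simp only [← zpow_natCast, ← zpow_add₀ ht]
    congr 1
    push_cast [hc₁, hc₂]
    linear_combination -hch
  simp only [qDilogCoeff, div_eq_mul_inv, mul_inv]
  linear_combination (qPoch (t ^ 2) c)⁻¹ * (qPoch (t ^ 2) (e₁ - c))⁻¹ *
    (qPoch (t ^ 2) (e₂ - c))⁻¹ * hpow

theorem qDilogCoeff_pentagon (ht₀ : t ≠ 0) (ht : ¬IsOfFinOrder t) (e₁ e₂ : ℕ) :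
    t ^ (e₁ * e₂) * qDilogCoeff t e₁ * qDilogCoeff t e₂ =
      ∑ c ∈ range (min e₁ e₂ + 1),
        t ^ (-(((e₁ - c) * c + (e₁ - c) * (e₂ - c) + c * (e₂ - c) : ℕ) : ℤ)) *
          qDilogCoeff t (e₁ - c) * qDilogCoeff t c * qDilogCoeff t (e₂ - c) := by
  have hq : ¬IsOfFinOrder (t ^ 2) := by simpa [isOfFinOrder_pow] using ht
  rw [pow_mul_qDilogCoeff_mul_qDilogCoeff ht₀, ← sum_pow_choose_two_div_qPoch hq, mul_sum]
  refine sum_congr rfl fun c hc => ?_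
  have hc' : c ≤ min e₁ e₂ := Nat.lt_succ_iff.1 (mem_range.1 hc)
  exact (zpow_mul_qDilogCoeff_mul_qDilogCoeff_mul_qDilogCoeff ht₀
    (hc'.trans (min_le_left _ _)) (hc'.trans (min_le_right _ _))).symm

end Field

lemma RatFunc.not_isOfFinOrder_X : ¬IsOfFinOrder (RatFunc.X : RatFunc ℚ) := by
  -- `RatFunc.transcendental_X` is stated for the `ℚ`-algebra structure coming from `ℚ[X]`
  have hX : Transcendental ℚ (RatFunc.X : RatFunc ℚ) := by
    convert RatFunc.transcendental_X (K := ℚ)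
    exact Subsingleton.elim _ _
  exact hX.not_isOfFinOrder

lemma Aq_eq_qDilogCoeff : Aq = qDilogCoeff RatFunc.X :=
  funext fun d => by simp only [Aq, qDilogCoeff, qPoch, div_eq_mul_inv, ← pow_mul]

/-- The coefficientwise form of the quantum dilogarithm (wall-crossing) identity
`A^{(0)}(t₂) ∗ A^{(0)}(t₁) = A^{(0)}(t₁) ∗ A^{(0)}(t₁t₂) ∗ A^{(0)}(t₂)` for the A₂
quiver `• → •`: for all `e₁, e₂ ∈ ℕ`,
`q^{e₁e₂} A(e₁) A(e₂) = Σ_{c=0}^{min(e₁,e₂)} q^{−(e₁−c)c − (e₁−c)(e₂−c) − c(e₂−c)}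
  A(e₁−c) A(c) A(e₂−c)`. -/
theorem quantum_dilogarithm_identity (e₁ e₂ : ℕ) :
    (RatFunc.X : RatFunc ℚ) ^ (e₁ * e₂) * Aq e₁ * Aq e₂ =
      ∑ c ∈ Finset.range (min e₁ e₂ + 1),
        (RatFunc.X : RatFunc ℚ) ^
            (-(((e₁ - c) * c + (e₁ - c) * (e₂ - c) + c * (e₂ - c) : ℕ) : ℤ)) *
          Aq (e₁ - c) * Aq c * Aq (e₂ - c) := by
  rw [Aq_eq_qDilogCoeff]
  exact qDilogCoeff_pentagon RatFunc.X_ne_zero RatFunc.not_isOfFinOrder_X e₁ e₂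
end
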